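/- For every natural number k ≥ 2, every finite unit-distance graph G = (V,E) with E nonempty, and every periodic k-coloring c of the plane, one has m_k(G) ≤ p^per(c). (This is the left-hand inequality of Theorem 1.) -/

import Mathlib

open MeasureTheory Real

noncomputable section

abbrev Plane := EuclideanSpace ℝ (Fin 2)

def vec (x y : ℝ) : Plane := (WithLp.equiv 2 (Fin 2 → ℝ)).symm ![x, y]

def dir (θ : ℝ) : Plane := vec (Real.cos θ) (Real.sin θ)

/-- The fundamental parallelogram `{t•u + s•v : 0 ≤ t, s < 1}`. -/
def para (u v : Plane) : Set Plane :=
  {x | ∃ t s : ℝ, 0 ≤ t ∧ t < 1 ∧ 0 ≤ s ∧ s < 1 ∧ x = t • u + s • v}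

/-- `p^per(c)` for a periodic coloring with fundamental parallelogram `para u v`. -/
def pper {k : ℕ} (c : Plane → Fin k) (u v : Plane) : ℝ :=
  (1 / (2 * π * (volume (para u v)).toReal)) *
    ∫ a in para u v, ∫ θ in (0:ℝ)..(2*π),
      (if c a = c (a + dir θ) then (1:ℝ) else 0)

-- Number of monochromatic edges of `G` under the vertex coloring `χ`.
open Classical in
def monoCount {V : Type} [Fintype V] {k : ℕ} (G : SimpleGraph V) (χ : V → Fin k) : ℕ :=
  (G.edgeFinset.filter fun e => (e.map χ).IsDiag).card

-- `m_k(G)`: the least fraction of monochromatic edges over all `k`-colorings of `G`.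
open Classical in
def mval {V : Type} [Fintype V] (k : ℕ) (G : SimpleGraph V) : ℝ :=
  ⨅ χ : V → Fin k, (monoCount G χ : ℝ) / (G.edgeFinset.card : ℝ)

/-!
Move the embedded graph by a random rigid motion `x ↦ a + rot θ x`, with `a` uniform in the
fundamental parallelogram and `θ` uniform in `(0, 2π]`, and colour each vertex by the colour of its
image. An edge `pq` becomes a unit needle; since `c` is invariant under the lattice, translating
by `rot θ p` does not change the average over `a`, and writing `q - p = dir φ` only shifts `θ` by
`φ`. Hence each edge is monochromatic with probability `p^per(c)`, so the expected fraction of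
monochromatic edges is `p^per(c)`, while it is never below `m_k(G)`.
-/

open Function Submodule in
theorem ZSpan.setIntegral_fundamentalDomain_add_left {E F ι : Type*}
    [NormedAddCommGroup E] [NormedSpace ℝ E] [MeasurableSpace E] [BorelSpace E]
    [NormedAddCommGroup F] [NormedSpace ℝ F] [Finite ι]
    (b : Module.Basis ι ℝ E) (μ : Measure E) [μ.IsAddLeftInvariant] {g : E → F}
    (hg : ∀ l ∈ span ℤ (Set.range b), Periodic g l) (w : E) :
    ∫ a in fundamentalDomain b, g (w + a) ∂μ = ∫ a in fundamentalDomain b, g a ∂μ := by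
  have : Countable (span ℤ (Set.range b)).toAddSubgroup :=
    inferInstanceAs (Countable (span ℤ (Set.range b)))
  have hD := ZSpan.isAddFundamentalDomain' b μ
  rw [← (measurePreserving_add_left μ w).setIntegral_image_emb (measurableEmbedding_addLeft w)]
  refine (hD.vadd_of_comm w).setIntegral_eq hD fun l x => ?_
  rw [AddSubgroup.vadd_def, vadd_eq_add, add_comm]
  exact hg l l.2 x

theorem Function.Periodic.of_mem_span_int {E X ι : Type*} [AddCommGroup E] {f : E → X}
    {b : ι → E} (hf : ∀ i, Periodic f (b i)) {l : E} (hl : l ∈ Submodule.span ℤ (Set.range b)) :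
    Periodic f l := by
  induction hl using Submodule.span_induction with
  | mem _ hx => obtain ⟨i, rfl⟩ := hx; exact hf i
  | zero => exact fun x => by rw [add_zero]
  | add _ _ _ _ hx hy => exact hx.add_period hy
  | smul n _ _ hx => exact hx.zsmul n

theorem Function.Periodic.setIntegral_Ioc_comp_add_right {E : Type*} [NormedAddCommGroup E]
    [NormedSpace ℝ E] {f : ℝ → E} {T : ℝ} (hf : Periodic f T) (hT : 0 ≤ T) (φ : ℝ) :
    ∫ θ in Set.Ioc 0 T, f (θ + φ) = ∫ θ in Set.Ioc 0 T, f θ := by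
  rw [← intervalIntegral.integral_of_le hT, ← intervalIntegral.integral_of_le hT,
    intervalIntegral.integral_comp_add_right, zero_add, add_comm T]
  simpa using hf.intervalIntegral_add_eq φ 0

section Lattice

variable {u v : Plane}

def latticeBasis (huv : LinearIndependent ℝ ![u, v]) : Module.Basis (Fin 2) ℝ Plane :=
  basisOfLinearIndependentOfCardEqFinrank huv (by simp)

lemma coe_latticeBasis (huv : LinearIndependent ℝ ![u, v]) : ⇑(latticeBasis huv) = ![u, v] :=
  coe_basisOfLinearIndependentOfCardEqFinrank huv _

lemma para_eq_fundamentalDomain (huv : LinearIndependent ℝ ![u, v]) :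
    para u v = ZSpan.fundamentalDomain (latticeBasis huv) := by
  ext x
  rw [ZSpan.mem_fundamentalDomain]
  constructor
  · rintro ⟨t, s, ht0, ht1, hs0, hs1, rfl⟩ i
    have h : t • u + s • v = (latticeBasis huv).equivFun.symm ![t, s] := by
      simp [Module.Basis.equivFun_symm_apply, Fin.sum_univ_two, coe_latticeBasis]
    rw [h, ← Module.Basis.equivFun_apply, LinearEquiv.apply_symm_apply]
    fin_cases i <;> simp [*]
  · intro hx
    refine ⟨_, _, (hx 0).1, (hx 0).2, (hx 1).1, (hx 1).2, ?_⟩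
    simpa [Fin.sum_univ_two, coe_latticeBasis] using ((latticeBasis huv).sum_repr x).symm

lemma volume_para_lt_top (huv : LinearIndependent ℝ ![u, v]) : volume (para u v) < ⊤ := by
  rw [para_eq_fundamentalDomain huv]
  exact (ZSpan.fundamentalDomain_isBounded _).measure_lt_top

lemma volume_para_ne_zero (huv : LinearIndependent ℝ ![u, v]) : volume (para u v) ≠ 0 := by
  rw [para_eq_fundamentalDomain huv]
  exact ZSpan.measure_fundamentalDomain_ne_zero _

lemma setIntegral_para_add_left (huv : LinearIndependent ℝ ![u, v]) {g : Plane → ℝ}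
    (hu : Function.Periodic g u) (hv : Function.Periodic g v) (w : Plane) :
    ∫ a in para u v, g (w + a) = ∫ a in para u v, g a := by
  rw [para_eq_fundamentalDomain huv]
  refine ZSpan.setIntegral_fundamentalDomain_add_left _ _ (fun l hl => ?_) w
  refine Function.Periodic.of_mem_span_int (fun i => ?_) hl
  fin_cases i <;> simpa [coe_latticeBasis]

end Lattice

section Rotation

def rot (θ : ℝ) (x : Plane) : Plane := Real.cos θ • x + Real.sin θ • vec (-x 1) (x 0)

lemma Plane.ext {x y : Plane} (h0 : x 0 = y 0) (h1 : x 1 = y 1) : x = y := by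
  ext i
  fin_cases i <;> assumption

@[simp] lemma vec_zero (x y : ℝ) : vec x y 0 = x := rfl
@[simp] lemma vec_one (x y : ℝ) : vec x y 1 = y := rfl

lemma rot_apply_zero (θ : ℝ) (x : Plane) : rot θ x 0 = Real.cos θ * x 0 - Real.sin θ * x 1 := by
  simp [rot]
  ring

lemma rot_apply_one (θ : ℝ) (x : Plane) : rot θ x 1 = Real.cos θ * x 1 + Real.sin θ * x 0 := by
  simp [rot]

lemma rot_add (θ : ℝ) (x y : Plane) : rot θ (x + y) = rot θ x + rot θ y := by
  apply Plane.ext <;> simp only [PiLp.add_apply, rot_apply_zero, rot_apply_one] <;> ring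

@[simp] lemma rot_zero (θ : ℝ) : rot θ 0 = 0 := by
  apply Plane.ext <;> simp [rot_apply_zero, rot_apply_one]

lemma rot_dir (θ φ : ℝ) : rot θ (dir φ) = dir (θ + φ) := by
  apply Plane.ext
  · simp [rot_apply_zero, dir, Real.cos_add]
  · simp [rot_apply_one, dir, Real.sin_add]
    ring

lemma rot_add_two_pi (θ : ℝ) : rot (θ + 2 * π) = rot θ := by
  ext1 x
  simp [rot]

lemma continuous_add_rot (p : Plane) : Continuous fun z : Plane × ℝ => z.1 + rot z.2 p := by
  unfold rot
  fun_prop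

lemma exists_eq_dir_of_norm_eq_one {w : Plane} (hw : ‖w‖ = 1) : ∃ φ, w = dir φ := by
  set z : ℂ := ⟨w 0, w 1⟩
  have hz : ‖z‖ = 1 := by
    rw [← hw, EuclideanSpace.norm_eq, Complex.norm_def, Complex.normSq_mk, Fin.sum_univ_two]
    simp [sq]
  have hz0 : z ≠ 0 := norm_ne_zero_iff.mp (by rw [hz]; exact one_ne_zero)
  refine ⟨z.arg, Plane.ext ?_ ?_⟩
  · simpa [hz, dir, z] using (Complex.cos_arg hz0).symm
  · simpa [hz, dir, z] using (Complex.sin_arg z).symm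

end Rotation

section RigidMotion

variable {k : ℕ} {c : Plane → Fin k} {u v : Plane}

/-- A point `(a, θ)` stands for the rigid motion `x ↦ a + rot θ x`; the measure is not
normalised. -/
def rigidMotionMeasure (u v : Plane) : Measure (Plane × ℝ) :=
  (volume.restrict (para u v)).prod (volume.restrict (Set.Ioc 0 (2 * π)))

def sameColor (c : Plane → Fin k) (p q : Plane) (z : Plane × ℝ) : ℝ :=
  if c (z.1 + rot z.2 p) = c (z.1 + rot z.2 q) then 1 else 0

lemma sameColor_zero_dir_zero (a : Plane) (θ : ℝ) :
    sameColor c 0 (dir 0) (a, θ) = if c a = c (a + dir θ) then 1 else 0 := by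
  simp [sameColor, rot_dir]

lemma sameColor_add_two_pi (p q a : Plane) (θ : ℝ) :
    sameColor c p q (a, θ + 2 * π) = sameColor c p q (a, θ) := by
  simp [sameColor, rot_add_two_pi]

lemma isFiniteMeasure_rigidMotionMeasure (huv : LinearIndependent ℝ ![u, v]) :
    IsFiniteMeasure (rigidMotionMeasure u v) := by
  have := Fact.mk (volume_para_lt_top huv)
  unfold rigidMotionMeasure
  infer_instance

lemma rigidMotionMeasure_real_univ :
    (rigidMotionMeasure u v).real Set.univ = 2 * π * (volume (para u v)).toReal := by
  rw [measureReal_def, rigidMotionMeasure, ← Set.univ_prod_univ, Measure.prod_prod,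
    Measure.restrict_apply_univ, Measure.restrict_apply_univ, Real.volume_Ioc, sub_zero,
    ENNReal.toReal_mul, ENNReal.toReal_ofReal two_pi_pos.le, mul_comm]

lemma rigidMotionMeasure_real_univ_pos (huv : LinearIndependent ℝ ![u, v]) :
    0 < (rigidMotionMeasure u v).real Set.univ := by
  rw [rigidMotionMeasure_real_univ]
  exact mul_pos two_pi_pos
    (ENNReal.toReal_pos (volume_para_ne_zero huv) (volume_para_lt_top huv).ne)

lemma integrable_sameColor (hc : Measurable c) (huv : LinearIndependent ℝ ![u, v])
    (p q : Plane) :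
    Integrable (sameColor c p q) (rigidMotionMeasure u v) := by
  have := isFiniteMeasure_rigidMotionMeasure huv
  refine Integrable.of_bound ?_ 1 (ae_of_all _ fun z => ?_)
  · refine (Measurable.ite ?_ measurable_const measurable_const).aestronglyMeasurable
    exact measurableSet_eq_fun (hc.comp (continuous_add_rot p).measurable)
      (hc.comp (continuous_add_rot q).measurable)
  · unfold sameColor; split_ifs <;> simp

lemma pper_eq_integral_sameColor (hc : Measurable c) (huv : LinearIndependent ℝ ![u, v]) :
    pper c u v = (∫ z, sameColor c 0 (dir 0) z ∂rigidMotionMeasure u v) /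
      (rigidMotionMeasure u v).real Set.univ := by
  rw [pper, rigidMotionMeasure_real_univ, rigidMotionMeasure,
    integral_prod _ (integrable_sameColor hc huv _ _), one_div, inv_mul_eq_div]
  congr 1
  refine integral_congr_ae (ae_of_all _ fun a => ?_)
  simp only [intervalIntegral.integral_of_le two_pi_pos.le, sameColor_zero_dir_zero]

lemma setIntegral_sameColor_add_dir (hper : ∀ x : Plane, c (x + u) = c x ∧ c (x + v) = c x)
    (huv : LinearIndependent ℝ ![u, v]) (p : Plane) (φ θ : ℝ) :
    ∫ a in para u v, sameColor c p (p + dir φ) (a, θ) =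
      ∫ a in para u v, sameColor c 0 (dir 0) (a, θ + φ) := by
  have hlat : ∀ w, Function.Periodic c w → Function.Periodic
      (fun x => sameColor c 0 (dir 0) (x, θ + φ)) w := fun w hw x => by
    simp only [sameColor_zero_dir_zero, add_right_comm x w, hw x, hw (x + dir (θ + φ))]
  rw [← setIntegral_para_add_left huv (hlat u fun x => (hper x).1) (hlat v fun x => (hper x).2)
    (rot θ p)]
  congr 1 with a
  rw [sameColor_zero_dir_zero]
  simp only [sameColor, rot_add, rot_dir, add_comm (rot θ p) a, add_assoc]

lemma integral_sameColor_add_dir (hc : Measurable c)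
    (hper : ∀ x : Plane, c (x + u) = c x ∧ c (x + v) = c x)
    (huv : LinearIndependent ℝ ![u, v]) (p : Plane) (φ : ℝ) :
    ∫ z, sameColor c p (p + dir φ) z ∂rigidMotionMeasure u v =
      ∫ z, sameColor c 0 (dir 0) z ∂rigidMotionMeasure u v := by
  have := isFiniteMeasure_rigidMotionMeasure huv
  rw [rigidMotionMeasure, integral_prod_symm _ (integrable_sameColor hc huv _ _),
    integral_prod_symm _ (integrable_sameColor hc huv _ _)]
  simp_rw [setIntegral_sameColor_add_dir hper huv]
  have hperiodic : Function.Periodic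
      (fun θ => ∫ a in para u v, sameColor c 0 (dir 0) (a, θ)) (2 * π) := fun θ => by
    simp only [sameColor_add_two_pi]
  exact hperiodic.setIntegral_Ioc_comp_add_right two_pi_pos.le φ

lemma integral_sameColor_of_dist_eq_one (hc : Measurable c)
    (hper : ∀ x : Plane, c (x + u) = c x ∧ c (x + v) = c x)
    (huv : LinearIndependent ℝ ![u, v]) {p q : Plane} (hpq : dist p q = 1) :
    ∫ z, sameColor c p q z ∂rigidMotionMeasure u v =
      ∫ z, sameColor c 0 (dir 0) z ∂rigidMotionMeasure u v := by
  obtain ⟨φ, hφ⟩ := exists_eq_dir_of_norm_eq_one (by rwa [← dist_eq_norm'] : ‖q - p‖ = 1)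
  rw [← integral_sameColor_add_dir hc hper huv p φ, ← hφ, add_sub_cancel]

end RigidMotion

section Graph

variable {V : Type} [Fintype V] {k : ℕ} (G : SimpleGraph V)

open Classical in
lemma monoCount_eq_sum (χ : V → Fin k) :
    (monoCount G χ : ℝ) = ∑ e ∈ G.edgeFinset, if (e.map χ).IsDiag then 1 else 0 :=
  Finset.natCast_card_filter _ _

open Classical in
lemma mval_le (χ : V → Fin k) : mval k G ≤ monoCount G χ / G.edgeFinset.card :=
  ciInf_le ⟨0, by rintro _ ⟨χ, rfl⟩; positivity⟩ χ

end Graph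

section MovedColoring

variable {V : Type} {k : ℕ} {c : Plane → Fin k} {u v : Plane}

def movedColoring (c : Plane → Fin k) (f : V → Plane) (z : Plane × ℝ) : V → Fin k :=
  fun i => c (z.1 + rot z.2 (f i))

lemma ite_isDiag_map_movedColoring (f : V → Plane) (i j : V) (z : Plane × ℝ) :
    (if (s(i, j).map (movedColoring c f z)).IsDiag then (1 : ℝ) else 0) =
      sameColor c (f i) (f j) z := by
  simp [movedColoring, sameColor]

lemma integrable_ite_isDiag_map_movedColoring (hc : Measurable c)
    (huv : LinearIndependent ℝ ![u, v]) (f : V → Plane) (e : Sym2 V) :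
    Integrable (fun z => if (e.map (movedColoring c f z)).IsDiag then (1 : ℝ) else 0)
      (rigidMotionMeasure u v) := by
  induction e using Sym2.ind with
  | h i j =>
    simpa only [ite_isDiag_map_movedColoring] using integrable_sameColor hc huv (f i) (f j)

lemma integral_ite_isDiag_map_movedColoring (hc : Measurable c)
    (hper : ∀ x : Plane, c (x + u) = c x ∧ c (x + v) = c x) (huv : LinearIndependent ℝ ![u, v])
    {G : SimpleGraph V} {f : V → Plane} (hf : ∀ i j : V, G.Adj i j → dist (f i) (f j) = 1)
    {e : Sym2 V} (he : e ∈ G.edgeSet) :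
    ∫ z, (if (e.map (movedColoring c f z)).IsDiag then (1 : ℝ) else 0) ∂rigidMotionMeasure u v =
      ∫ z, sameColor c 0 (dir 0) z ∂rigidMotionMeasure u v := by
  induction e using Sym2.ind with
  | h i j =>
    simpa only [ite_isDiag_map_movedColoring] using
      integral_sameColor_of_dist_eq_one hc hper huv (hf i j he)

open Classical in
lemma integrable_monoCount_movedColoring [Fintype V] (hc : Measurable c)
    (huv : LinearIndependent ℝ ![u, v]) (G : SimpleGraph V) (f : V → Plane) :
    Integrable (fun z => (monoCount G (movedColoring c f z) : ℝ)) (rigidMotionMeasure u v) := by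
  simp_rw [monoCount_eq_sum]
  exact integrable_finsetSum _ fun e _ => integrable_ite_isDiag_map_movedColoring hc huv f e

open Classical in
lemma integral_monoCount_movedColoring [Fintype V] (hc : Measurable c)
    (hper : ∀ x : Plane, c (x + u) = c x ∧ c (x + v) = c x) (huv : LinearIndependent ℝ ![u, v])
    (G : SimpleGraph V) {f : V → Plane} (hf : ∀ i j : V, G.Adj i j → dist (f i) (f j) = 1) :
    ∫ z, (monoCount G (movedColoring c f z) : ℝ) ∂rigidMotionMeasure u v =
      G.edgeFinset.card * ∫ z, sameColor c 0 (dir 0) z ∂rigidMotionMeasure u v := by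
  simp_rw [monoCount_eq_sum]
  rw [integral_finsetSum _ fun e _ => integrable_ite_isDiag_map_movedColoring hc huv f e,
    Finset.sum_congr rfl fun e he => integral_ite_isDiag_map_movedColoring hc hper huv hf
      (SimpleGraph.mem_edgeFinset.mp he),
    Finset.sum_const, nsmul_eq_mul]

end MovedColoring

theorem stmt0 (k : ℕ) {V : Type} [Fintype V] (G : SimpleGraph V)
    (hE : G.edgeSet.Nonempty)
    (hUD : ∃ f : V → Plane, ∀ i j : V, G.Adj i j → dist (f i) (f j) = 1)
    (c : Plane → Fin k) (hc : Measurable c) (u v : Plane)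
    (huv : LinearIndependent ℝ ![u, v])
    (hper : ∀ x : Plane, c (x + u) = c x ∧ c (x + v) = c x) :
    mval k G ≤ pper c u v := by
  classical
  obtain ⟨f, hf⟩ := hUD
  have := isFiniteMeasure_rigidMotionMeasure huv
  have hcard : (0 : ℝ) < G.edgeFinset.card :=
    Nat.cast_pos.mpr (Finset.card_pos.mpr (Set.toFinset_nonempty.mpr hE))
  rw [pper_eq_integral_sameColor hc huv, le_div_iff₀ (rigidMotionMeasure_real_univ_pos huv)]
  calc mval k G * (rigidMotionMeasure u v).real Set.univ
      = ∫ _, mval k G ∂rigidMotionMeasure u v := by rw [integral_const, smul_eq_mul, mul_comm]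
    _ ≤ ∫ z, (monoCount G (movedColoring c f z) : ℝ) / G.edgeFinset.card ∂rigidMotionMeasure u v :=
      integral_mono (integrable_const _)
        ((integrable_monoCount_movedColoring hc huv G f).div_const _) fun z => mval_le G _
    _ = ∫ z, sameColor c 0 (dir 0) z ∂rigidMotionMeasure u v := by
      rw [integral_div, integral_monoCount_movedColoring hc hper huv G hf,
        mul_div_cancel_left₀ _ hcard.ne']

end
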